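/- arXiv:2206.05588 — 2 statements merged into one kernel-verified Lean document; each statement's English description precedes it below -/
import Mathlib

section
/- Let n be a positive integer divisible by 8 and let C_max ⊆ F_2^n be a doubly-even self-orthogonal code of dimension n/2 − 1. Let C_1, C_2, C_3 be three pairwise distinct self-dual codes of length n each containing C_max, where C_1 is singly-even and C_2, C_3 are doubly-even. If the minimum distance of C_1 equals 2, then the minimum distances of C_2 and C_3 coincide: d(C_2) = d(C_3). -/
/-
A weight-2 word `z` of `C₁` lies in `D = Cmaxᗮ`, which has dimension `n/2 + 1`, but in neither
doubly-even code, so `D = C₃ + ⟨z⟩`. Hence every `c ∈ C₂ \ C₃` has `c + z ∈ C₃`; as both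
weights are divisible by 4 and `wt z = 2`, `wt (c + z) = wt c`. By symmetry `C₂` and `C₃` have
the same nonzero weights, hence the same minimum distance.
-/

open Finset

/-- Hamming weight of a binary vector. -/
def wt {n : ℕ} (a : Fin n → ZMod 2) : ℕ :=
  (Finset.univ.filter fun i => a i ≠ 0).card

/-- Number of coordinates where both vectors are 1. -/
def mu {n : ℕ} (a b : Fin n → ZMod 2) : ℕ :=
  (Finset.univ.filter fun i => a i = 1 ∧ b i = 1).card

/-- The dual code with respect to the standard inner product over F_2. -/
def dualCode {n : ℕ} (C : Submodule (ZMod 2) (Fin n → ZMod 2)) :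
    Submodule (ZMod 2) (Fin n → ZMod 2) where
  carrier := {x | ∀ c ∈ C, ∑ i, x i * c i = 0}
  zero_mem' := by intro c hc; simp
  add_mem' := by
    intro x y hx hy c hc
    simp [add_mul, Finset.sum_add_distrib, hx c hc, hy c hc]
  smul_mem' := by
    intro r x hx c hc
    simp [mul_assoc, ← Finset.mul_sum, hx c hc]

def IsSelfDual {n : ℕ} (C : Submodule (ZMod 2) (Fin n → ZMod 2)) : Prop :=
  C = dualCode C

def DoublyEven {n : ℕ} (C : Submodule (ZMod 2) (Fin n → ZMod 2)) : Prop :=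
  ∀ c ∈ C, 4 ∣ wt c

def SinglyEven {n : ℕ} (C : Submodule (ZMod 2) (Fin n → ZMod 2)) : Prop :=
  ∃ c ∈ C, ¬ 4 ∣ wt c

/-- Minimum distance: smallest nonzero weight of a codeword. -/
noncomputable def minDist {n : ℕ} (C : Submodule (ZMod 2) (Fin n → ZMod 2)) : ℕ :=
  sInf {d | ∃ c ∈ C, c ≠ 0 ∧ wt c = d}

open Module Submodule

theorem sup_span_singleton_eq_of_finrank_eq_succ {K V : Type*} [Field K] [AddCommGroup V]
    [Module K V] [FiniteDimensional K V] {A D : Submodule K V} {z : V} (hA : A ≤ D)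
    (hzD : z ∈ D) (hzA : z ∉ A) (hD : finrank K D = finrank K A + 1) :
    A ⊔ span K {z} = D :=
  eq_of_le_of_finrank_le (sup_le hA ((span_singleton_le_iff_mem z D).mpr hzD))
    (by rw [finrank_sup_span_singleton hzA, hD])

theorem add_mem_of_mem_sup_span_singleton {V : Type*} [AddCommGroup V] [Module (ZMod 2) V]
    {A : Submodule (ZMod 2) V} {c z : V} (h : c + z ∈ A ⊔ span (ZMod 2) {z}) (hc : c ∉ A) :
    c + z ∈ A := by
  obtain ⟨y, hy, w, hw, hyw⟩ := mem_sup.mp h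
  obtain ⟨r, rfl⟩ := mem_span_singleton.mp hw
  obtain rfl | rfl := (by decide : ∀ r : ZMod 2, r = 0 ∨ r = 1) r
  · simpa [← hyw] using hy
  · rw [one_smul, add_left_inj] at hyw
    exact absurd (hyw ▸ hy) hc

variable {n : ℕ}

theorem dualCode_eq_comap_dualAnnihilator (C : Submodule (ZMod 2) (Fin n → ZMod 2)) :
    dualCode C = C.dualAnnihilator.comap (dotProductEquiv (ZMod 2) (Fin n)).toLinearMap := by
  ext x
  simp [dualCode, dotProduct]

theorem finrank_add_finrank_dualCode (C : Submodule (ZMod 2) (Fin n → ZMod 2)) :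
    finrank (ZMod 2) C + finrank (ZMod 2) (dualCode C) = n := by
  rw [dualCode_eq_comap_dualAnnihilator, comap_equiv_eq_map_symm, LinearEquiv.finrank_map_eq,
    Subspace.finrank_add_finrank_dualAnnihilator_eq]
  simp

theorem dualCode_anti {C C' : Submodule (ZMod 2) (Fin n → ZMod 2)} (h : C ≤ C') :
    dualCode C' ≤ dualCode C :=
  fun _ hx c hc => hx c (h hc)

theorem IsSelfDual.two_mul_finrank {C : Submodule (ZMod 2) (Fin n → ZMod 2)} (hC : IsSelfDual C) :
    2 * finrank (ZMod 2) C = n := by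
  have := finrank_add_finrank_dualCode C
  rw [← hC] at this
  omega

theorem IsSelfDual.le_dualCode {M C : Submodule (ZMod 2) (Fin n → ZMod 2)} (hC : IsSelfDual C)
    (hM : M ≤ C) : C ≤ dualCode M :=
  hC.le.trans (dualCode_anti hM)

theorem wt_eq_zero_iff {a : Fin n → ZMod 2} : wt a = 0 ↔ a = 0 :=
  hammingNorm_eq_zero

theorem mu_le_wt_right (a b : Fin n → ZMod 2) : mu a b ≤ wt b :=
  card_le_card fun i hi => by simp_all

theorem wt_add_add_two_mul_mu (a b : Fin n → ZMod 2) :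
    wt (a + b) + 2 * mu a b = wt a + wt b := by
  simp only [wt, mu, card_filter, mul_sum, ← sum_add_distrib]
  refine sum_congr rfl fun i _ => ?_
  have key : ∀ x y : ZMod 2,
      ((if x + y ≠ 0 then 1 else 0) + 2 * (if x = 1 ∧ y = 1 then 1 else 0) : ℕ)
        = (if x ≠ 0 then 1 else 0) + (if y ≠ 0 then 1 else 0) := by decide
  exact key (a i) (b i)

-- `wt (c + z) = wt c + 2 - 2 * mu c z` with `mu c z ≤ 2`; only `mu c z = 1` preserves it mod 4.
theorem wt_add_eq_of_wt_eq_two {c z : Fin n → ZMod 2} (hz : wt z = 2) (hc : 4 ∣ wt c)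
    (hcz : 4 ∣ wt (c + z)) : wt (c + z) = wt c := by
  have := wt_add_add_two_mul_mu c z
  have := mu_le_wt_right c z
  omega

theorem DoublyEven.notMem_of_wt_eq_two {C : Submodule (ZMod 2) (Fin n → ZMod 2)}
    (hC : DoublyEven C) {z : Fin n → ZMod 2} (hz : wt z = 2) : z ∉ C :=
  fun h => by have := hC z h; omega

def nonzeroWeights (C : Submodule (ZMod 2) (Fin n → ZMod 2)) : Set ℕ :=
  {d | ∃ c ∈ C, c ≠ 0 ∧ wt c = d}

theorem minDist_eq_sInf_nonzeroWeights (C : Submodule (ZMod 2) (Fin n → ZMod 2)) :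
    minDist C = sInf (nonzeroWeights C) :=
  rfl

theorem exists_wt_eq_minDist {C : Submodule (ZMod 2) (Fin n → ZMod 2)} (h : 0 < minDist C) :
    ∃ c ∈ C, c ≠ 0 ∧ wt c = minDist C :=
  Nat.sInf_mem (Nat.nonempty_of_pos_sInf h)

theorem nonzeroWeights_subset_of_le_sup_span {A B : Submodule (ZMod 2) (Fin n → ZMod 2)}
    (hA : DoublyEven A) (hB : DoublyEven B) {z : Fin n → ZMod 2} (hz : wt z = 2)
    (hAB : A ≤ B ⊔ span (ZMod 2) {z}) :
    nonzeroWeights A ⊆ nonzeroWeights B := by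
  rintro _ ⟨c, hcA, hc0, rfl⟩
  by_cases hcB : c ∈ B
  · exact ⟨c, hcB, hc0, rfl⟩
  have hczB : c + z ∈ B := add_mem_of_mem_sup_span_singleton
    (add_mem (hAB hcA) (mem_sup_right (mem_span_singleton_self z))) hcB
  have hwt := wt_add_eq_of_wt_eq_two hz (hA c hcA) (hB _ hczB)
  refine ⟨c + z, hczB, fun h0 => hc0 ?_, hwt⟩
  rw [← wt_eq_zero_iff, ← hwt, h0, wt_eq_zero_iff]

theorem neighborhood_minDist_two_general {n : ℕ} (hn : 0 < n)
    (Cmax C1 C2 C3 : Submodule (ZMod 2) (Fin n → ZMod 2))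
    (hdim : Module.finrank (ZMod 2) Cmax = n / 2 - 1)
    (hsd1 : IsSelfDual C1) (hsd2 : IsSelfDual C2) (hsd3 : IsSelfDual C3)
    (hle1 : Cmax ≤ C1) (hle2 : Cmax ≤ C2) (hle3 : Cmax ≤ C3)
    (hde2 : DoublyEven C2) (hde3 : DoublyEven C3)
    (hd1 : minDist C1 = 2) :
    minDist C2 = minDist C3 := by
  obtain ⟨z, hz1, -, hz⟩ := exists_wt_eq_minDist (hd1 ▸ two_pos : 0 < minDist C1)
  rw [hd1] at hz
  have hzD : z ∈ dualCode Cmax := hsd1.le_dualCode hle1 hz1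
  have hsup : ∀ C, IsSelfDual C → Cmax ≤ C → DoublyEven C →
      C ⊔ span (ZMod 2) {z} = dualCode Cmax := by
    intro C hsd hle hde
    refine sup_span_singleton_eq_of_finrank_eq_succ (hsd.le_dualCode hle) hzD
      (hde.notMem_of_wt_eq_two hz) ?_
    have := finrank_add_finrank_dualCode Cmax
    have := hsd.two_mul_finrank
    omega
  have h23 : C2 ≤ C3 ⊔ span (ZMod 2) {z} :=
    (hsd2.le_dualCode hle2).trans (hsup C3 hsd3 hle3 hde3).ge
  have h32 : C3 ≤ C2 ⊔ span (ZMod 2) {z} :=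
    (hsd3.le_dualCode hle3).trans (hsup C2 hsd2 hle2 hde2).ge
  rw [minDist_eq_sInf_nonzeroWeights, minDist_eq_sInf_nonzeroWeights,
    (nonzeroWeights_subset_of_le_sup_span hde2 hde3 hz h23).antisymm
      (nonzeroWeights_subset_of_le_sup_span hde3 hde2 hz h32)]

theorem neighborhood_minDist_two {n : ℕ} (hn : 0 < n) (h8 : 8 ∣ n)
    (Cmax C1 C2 C3 : Submodule (ZMod 2) (Fin n → ZMod 2))
    (hso : Cmax ≤ dualCode Cmax) (hde : DoublyEven Cmax)
    (hdim : Module.finrank (ZMod 2) Cmax = n / 2 - 1)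
    (h12 : C1 ≠ C2) (h13 : C1 ≠ C3) (h23 : C2 ≠ C3)
    (hsd1 : IsSelfDual C1) (hsd2 : IsSelfDual C2) (hsd3 : IsSelfDual C3)
    (hle1 : Cmax ≤ C1) (hle2 : Cmax ≤ C2) (hle3 : Cmax ≤ C3)
    (hse1 : SinglyEven C1) (hde2 : DoublyEven C2) (hde3 : DoublyEven C3)
    (hd1 : minDist C1 = 2) :
    minDist C2 = minDist C3 :=
  neighborhood_minDist_two_general hn Cmax C1 C2 C3 hdim hsd1 hsd2 hsd3 hle1 hle2 hle3 hde2 hde3 hd1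
end

section
/- Let C_max ⊆ F_2^n be a self-orthogonal doubly-even code of dimension n/2 − 1, and let γ_1, γ_2 ∈ F_2^n be such that C_max + span{γ_1} and C_max + span{γ_2} are two distinct self-dual codes of length n. Then μ(γ_1, γ_2) is odd; equivalently, the inner product γ_1 · γ_2 over F_2 equals 1. -/
open Finset

/-!
If `γ₁ ⬝ γ₂ = 0`, then `γ₂` is orthogonal to `Cmax` (which lies in the self-dual code
`Cmax + ⟨γ₂⟩`) and to `γ₁`, so `γ₂ ∈ (Cmax + ⟨γ₁⟩)^⊥ = Cmax + ⟨γ₁⟩`. Hence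
`Cmax + ⟨γ₂⟩ ≤ Cmax + ⟨γ₁⟩`, and an inclusion of self-dual codes is an equality, since taking
duals reverses it.
-/

open Matrix

variable {n : ℕ}

theorem natCast_mu (a b : Fin n → ZMod 2) : (mu a b : ZMod 2) = a ⬝ᵥ b := by
  have hcoord : ∀ x y : ZMod 2, (if x = 1 ∧ y = 1 then 1 else 0) = x * y := by decide
  simp only [mu, Finset.natCast_card_filter, hcoord, dotProduct]

theorem mem_dualCode_iff {C : Submodule (ZMod 2) (Fin n → ZMod 2)} {x : Fin n → ZMod 2} :
    x ∈ dualCode C ↔ ∀ c ∈ C, x ⬝ᵥ c = 0 :=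
  Iff.rfl

theorem dualCode_antitone : Antitone (dualCode (n := n)) :=
  fun _ _ hCD _ hx c hc => hx c (hCD hc)

theorem mem_dualCode_sup_span_singleton {C : Submodule (ZMod 2) (Fin n → ZMod 2)}
    {g x : Fin n → ZMod 2} :
    x ∈ dualCode (C ⊔ Submodule.span (ZMod 2) {g}) ↔ x ∈ dualCode C ∧ x ⬝ᵥ g = 0 := by
  refine ⟨fun hx => ⟨dualCode_antitone le_sup_left hx,
    hx g (Submodule.mem_sup_right (Submodule.mem_span_singleton_self g))⟩, ?_⟩
  rintro ⟨hxC, hxg⟩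
  rw [mem_dualCode_iff]
  intro c hc
  obtain ⟨a, ha, b, hb, rfl⟩ := Submodule.mem_sup.mp hc
  obtain ⟨r, rfl⟩ := Submodule.mem_span_singleton.mp hb
  rw [dotProduct_add, dotProduct_smul, mem_dualCode_iff.mp hxC a ha, hxg, smul_zero, add_zero]

theorem IsSelfDual.eq_of_le {C D : Submodule (ZMod 2) (Fin n → ZMod 2)}
    (hC : IsSelfDual C) (hD : IsSelfDual D) (hCD : C ≤ D) : C = D := by
  refine le_antisymm hCD ?_
  rw [hD, hC]
  exact dualCode_antitone hCD

theorem dotProduct_ne_zero_of_isSelfDual_sup_span_singleton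
    {C : Submodule (ZMod 2) (Fin n → ZMod 2)} {g₁ g₂ : Fin n → ZMod 2}
    (h₁ : IsSelfDual (C ⊔ Submodule.span (ZMod 2) {g₁}))
    (h₂ : IsSelfDual (C ⊔ Submodule.span (ZMod 2) {g₂}))
    (hne : C ⊔ Submodule.span (ZMod 2) {g₁} ≠ C ⊔ Submodule.span (ZMod 2) {g₂}) :
    g₁ ⬝ᵥ g₂ ≠ 0 := by
  intro horth
  have hg₂C : g₂ ∈ dualCode C := by
    have hg₂ : g₂ ∈ C ⊔ Submodule.span (ZMod 2) {g₂} :=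
      Submodule.mem_sup_right (Submodule.mem_span_singleton_self g₂)
    rw [h₂, mem_dualCode_sup_span_singleton] at hg₂
    exact hg₂.1
  have hg₂_mem : g₂ ∈ C ⊔ Submodule.span (ZMod 2) {g₁} := by
    rw [h₁, mem_dualCode_sup_span_singleton, dotProduct_comm]
    exact ⟨hg₂C, horth⟩
  have hle : C ⊔ Submodule.span (ZMod 2) {g₂} ≤ C ⊔ Submodule.span (ZMod 2) {g₁} :=
    sup_le le_sup_left ((Submodule.span_singleton_le_iff_mem _ _).mpr hg₂_mem)
  exact hne (h₂.eq_of_le h₁ hle).symm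

theorem mu_odd_of_distinct_selfDual_extensions_general {n : ℕ}
    (Cmax : Submodule (ZMod 2) (Fin n → ZMod 2))
    (γ1 γ2 : Fin n → ZMod 2)
    (h1 : IsSelfDual (Cmax ⊔ Submodule.span (ZMod 2) {γ1}))
    (h2 : IsSelfDual (Cmax ⊔ Submodule.span (ZMod 2) {γ2}))
    (hne : Cmax ⊔ Submodule.span (ZMod 2) {γ1} ≠ Cmax ⊔ Submodule.span (ZMod 2) {γ2}) :
    Odd (mu γ1 γ2) ∧ ∑ i, γ1 i * γ2 i = 1 := by
  have hdot := dotProduct_ne_zero_of_isSelfDual_sup_span_singleton h1 h2 hne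
  rw [← natCast_mu, Ne, ZMod.natCast_eq_zero_iff_even, Nat.not_even_iff_odd] at hdot
  exact ⟨hdot, (natCast_mu γ1 γ2).symm.trans (ZMod.natCast_eq_one_iff_odd.mpr hdot)⟩

theorem mu_odd_of_distinct_selfDual_extensions {n : ℕ}
    (Cmax : Submodule (ZMod 2) (Fin n → ZMod 2))
    (hso : Cmax ≤ dualCode Cmax) (hde : DoublyEven Cmax)
    (hdim : Module.finrank (ZMod 2) Cmax = n / 2 - 1)
    (γ1 γ2 : Fin n → ZMod 2)
    (h1 : IsSelfDual (Cmax ⊔ Submodule.span (ZMod 2) {γ1}))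
    (h2 : IsSelfDual (Cmax ⊔ Submodule.span (ZMod 2) {γ2}))
    (hne : Cmax ⊔ Submodule.span (ZMod 2) {γ1} ≠ Cmax ⊔ Submodule.span (ZMod 2) {γ2}) :
    Odd (mu γ1 γ2) ∧ ∑ i, γ1 i * γ2 i = 1 :=
  mu_odd_of_distinct_selfDual_extensions_general Cmax γ1 γ2 h1 h2 hne
end
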